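/- arXiv:2503.23273 — 7 statements merged into one kernel-verified Lean document; each statement's English description precedes it below -/
import Mathlib

section
/- Let σ be a serial-batch schedule without idle time with batches B_1,...,B_n. If a job J_j in an earlier batch B_a is exchanged with a job J_{j'} in a later batch B_c (a < c) with p_j ≥ p_{j'}, then in the resulting schedule (with batches re-scheduled without idle time) the completion time of every batch does not increase. -/
/-- Exchanging a job `j` from an earlier batch `B a` with a job `j'`
from a later batch `B c` (`a < c`), where `p j ≥ p j'`, does not increase the
completion time of any batch (batches re-scheduled without idle time). -/
theorem stmt_2 (n : ℕ) (s : ℝ) (hs : 0 ≤ s)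
    (p : ℕ → ℝ) (hp : ∀ j, 0 ≤ p j)
    (B B' : ℕ → Finset ℕ)
    (a c j j' : ℕ) (hac : a < c) (hcn : c < n)
    (hja : j ∈ B a) (hjc : j ∉ B c) (hj'c : j' ∈ B c) (hj'a : j' ∉ B a)
    (hne : j ≠ j') (hpp : p j' ≤ p j)
    (hB'a : B' a = insert j' ((B a).erase j))
    (hB'c : B' c = insert j ((B c).erase j'))
    (hB'other : ∀ i, i ≠ a → i ≠ c → B' i = B i)
    (C C' : ℕ → ℝ)
    (hC : ∀ i, C i = ∑ h ∈ Finset.range (i + 1),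
      ((if (B h).Nonempty then s else 0) + ∑ x ∈ B h, p x))
    (hC' : ∀ i, C' i = ∑ h ∈ Finset.range (i + 1),
      ((if (B' h).Nonempty then s else 0) + ∑ x ∈ B' h, p x)) :
    ∀ i, C' i ≤ C i := by
  have hBa : (B a).Nonempty := ⟨j, hja⟩
  have hBc : (B c).Nonempty := ⟨j', hj'c⟩
  have hB'a' : (B' a).Nonempty := by rw [hB'a]; exact ⟨j', Finset.mem_insert_self _ _⟩
  have hB'c' : (B' c).Nonempty := by rw [hB'c]; exact ⟨j, Finset.mem_insert_self _ _⟩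
  have hjne : j' ∉ (B a).erase j := fun h => hj'a (Finset.mem_of_mem_erase h)
  have hj'ne : j ∉ (B c).erase j' := fun h => hjc (Finset.mem_of_mem_erase h)
  set f : ℕ → ℝ := fun h => ((if (B h).Nonempty then s else 0) + ∑ x ∈ B h, p x) with hf
  set f' : ℕ → ℝ := fun h => ((if (B' h).Nonempty then s else 0) + ∑ x ∈ B' h, p x) with hf'
  have hfa : f' a = f a - p j + p j' := by
    simp only [hf, hf', hB'a, Finset.sum_insert hjne, Finset.sum_erase_eq_sub hja,
      if_pos hBa, Finset.insert_nonempty, if_pos trivial]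
    ring
  have hfc : f' c = f c - p j' + p j := by
    simp only [hf, hf', hB'c, Finset.sum_insert hj'ne, Finset.sum_erase_eq_sub hj'c,
      if_pos hBc, Finset.insert_nonempty, if_pos trivial]
    ring
  have hfo : ∀ h, h ≠ a → h ≠ c → f' h = f h := by
    intro h h1 h2
    simp only [hf, hf', hB'other h h1 h2]
  intro i
  rw [hC, hC']
  rcases lt_or_ge i c with hic | hic
  · apply Finset.sum_le_sum
    intro h hh
    rcases eq_or_ne h a with rfl | hha
    · show f' h ≤ f h
      rw [hfa]; linarith
    · have hhc : h ≠ c := by have := Finset.mem_range.mp hh; omega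
      exact le_of_eq (hfo h hha hhc)
  · have key : ∀ h, f' h = f h + ((if h = a then p j' - p j else 0)
        + (if h = c then p j - p j' else 0)) := by
      intro h
      rcases eq_or_ne h a with rfl | hha
      · rw [if_pos rfl, if_neg (by omega : h ≠ c), hfa]; ring
      · rcases eq_or_ne h c with rfl | hhc
        · rw [if_neg hha, if_pos rfl, hfc]; ring
        · rw [if_neg hha, if_neg hhc, hfo h hha hhc]; ring
    rw [Finset.sum_congr rfl (fun h _ => key h), Finset.sum_add_distrib,
      Finset.sum_add_distrib, Finset.sum_add_distrib, Finset.sum_ite_eq' (Finset.range (i+1)) a,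
      Finset.sum_ite_eq' (Finset.range (i+1)) c,
      if_pos (Finset.mem_range.mpr (by omega)), if_pos (Finset.mem_range.mpr (by omega))]
    linarith
end

section
/- Given a candidate set family F = {𝒥_1,...,𝒥_n} (disjoint sets with union the whole job set) and the greedy schedule σ* in which, for i = n down to 1, batch B*_i consists of the min{b, remaining available jobs} longest jobs among ∪_{h=i}^n 𝒥_h not yet assigned to batches B*_{i+1},...,B*_n, the schedule σ* has the minimum number of nonempty batches among all feasible schedules satisfying F. -/
/-- A schedule `B` (batches indexed `0,...,n-1`, at most `b` jobs each) satisfies the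
candidate set family `𝒥` if the batches are disjoint, together they contain exactly the
jobs of the family, every job of batch `B i` comes from `∪_{h ≥ i} 𝒥 h`, and all batches
from the first nonempty one onward are nonempty. -/
def SatisfiesCSF (n b : ℕ) (𝒥 B : ℕ → Finset ℕ) : Prop :=
  (∀ i j, i < n → j < n → i ≠ j → Disjoint (B i) (B j)) ∧
  ((Finset.range n).biUnion B = (Finset.range n).biUnion 𝒥) ∧
  (∀ i, i < n → (B i).card ≤ b) ∧
  (∀ i, i < n → B i ⊆ (Finset.Ico i n).biUnion 𝒥) ∧
  (∀ i j, i ≤ j → j < n → (B i).Nonempty → (B j).Nonempty)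

/-- The jobs available for batch `i` in the backward greedy construction:
jobs of `∪_{h ≥ i} 𝒥 h` not yet assigned to a higher-indexed batch. -/
def availGreedy (n : ℕ) (𝒥 Bstar : ℕ → Finset ℕ) (i : ℕ) : Finset ℕ :=
  (Finset.Ico i n).biUnion 𝒥 \ (Finset.Ico (i + 1) n).biUnion Bstar

/-- `Bstar` is the greedy backward schedule: for `i = n-1` down to `0`, batch `i`
consists of the `min b #available` longest available jobs. -/
def GreedySpec (n b : ℕ) (p : ℕ → ℝ) (𝒥 Bstar : ℕ → Finset ℕ) : Prop :=
  ∀ i, i < n →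
    Bstar i ⊆ availGreedy n 𝒥 Bstar i ∧
    (Bstar i).card = min b (availGreedy n 𝒥 Bstar i).card ∧
    (∀ x ∈ Bstar i, ∀ y ∈ availGreedy n 𝒥 Bstar i \ Bstar i, p y ≤ p x)


open Finset in
lemma csf_card_biUnion (n : ℕ) (C : ℕ → Finset ℕ)
    (hdisj : ∀ i j, i < n → j < n → i ≠ j → Disjoint (C i) (C j)) (i : ℕ) :
    ((Finset.Ico i n).biUnion C).card = ∑ h ∈ Finset.Ico i n, (C h).card :=
  Finset.card_biUnion fun a ha b hb hab =>
    hdisj a b (Finset.mem_Ico.mp ha).2 (Finset.mem_Ico.mp hb).2 hab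

open Finset in
lemma csf_biUnion_subset (n : ℕ) (𝒥 C : ℕ → Finset ℕ)
    (hsub : ∀ i, i < n → C i ⊆ (Finset.Ico i n).biUnion 𝒥) (i : ℕ) :
    (Finset.Ico i n).biUnion C ⊆ (Finset.Ico i n).biUnion 𝒥 := by
  refine Finset.biUnion_subset.mpr fun h hm => ?_
  obtain ⟨h1, h2⟩ := Finset.mem_Ico.mp hm
  exact (hsub h h2).trans
    (Finset.biUnion_subset_biUnion_of_subset_left _ (Finset.Ico_subset_Ico h1 le_rfl))

open Finset in
lemma upclosed_eq_Ico (n : ℕ) (S : Finset ℕ) (hsub : S ⊆ Finset.range n)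
    (hup : ∀ i ∈ S, ∀ j, i ≤ j → j < n → j ∈ S) :
    S = Finset.Ico (n - S.card) n := by
  have hcard : S.card ≤ n := by
    simpa using Finset.card_le_card hsub
  have hsub2 : S ⊆ Finset.Ico (n - S.card) n := by
    intro i hi
    have hin : i < n := Finset.mem_range.mp (hsub hi)
    have h2 : Finset.Ico i n ⊆ S := fun j hj => by
      obtain ⟨hj1, hj2⟩ := Finset.mem_Ico.mp hj
      exact hup i hi j hj1 hj2
    have h3 : n - i ≤ S.card := by
      simpa using Finset.card_le_card h2
    exact Finset.mem_Ico.mpr ⟨by omega, hin⟩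
  refine Finset.eq_of_subset_of_card_le hsub2 ?_
  rw [Nat.card_Ico]
  omega

open Finset in
lemma greedy_suffix_sum (n b : ℕ) (p : ℕ → ℝ) (𝒥 Bstar B : ℕ → Finset ℕ)
    (hgreedy : GreedySpec n b p 𝒥 Bstar)
    (hstar : SatisfiesCSF n b 𝒥 Bstar)
    (hB : SatisfiesCSF n b 𝒥 B) :
    ∀ d i, n ≤ i + d →
      ∑ h ∈ Finset.Ico i n, (B h).card ≤ ∑ h ∈ Finset.Ico i n, (Bstar h).card := by
  obtain ⟨hBd, hBu, hBb, hBs, hBne⟩ := hB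
  obtain ⟨hSd, hSu, hSb, hSs, hSne⟩ := hstar
  intro d
  induction d with
  | zero =>
    intro i hi
    rw [Finset.Ico_eq_empty (by omega)]
    simp
  | succ d ih =>
    intro i hi
    rcases le_or_gt n i with h | h
    · rw [Finset.Ico_eq_empty (by omega)]; simp
    have ih' := ih (i + 1) (by omega)
    rw [Finset.sum_eq_sum_Ico_succ_bot h, Finset.sum_eq_sum_Ico_succ_bot h]
    obtain ⟨_, hcard, _⟩ := hgreedy i h
    rcases le_or_gt b (availGreedy n 𝒥 Bstar i).card with hm | hm
    · rw [hcard, min_eq_left hm]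
      exact Nat.add_le_add (hBb i h) ih'
    · rw [hcard, min_eq_right hm.le]
      -- availGreedy card = card K_i - Sstar(i+1), so RHS = card K_i
      have hKsub : (Finset.Ico (i+1) n).biUnion Bstar ⊆ (Finset.Ico i n).biUnion 𝒥 :=
        (csf_biUnion_subset n 𝒥 Bstar hSs (i+1)).trans
          (Finset.biUnion_subset_biUnion_of_subset_left _
            (Finset.Ico_subset_Ico (by omega) le_rfl))
      have havail : (availGreedy n 𝒥 Bstar i).card =
          ((Finset.Ico i n).biUnion 𝒥).card - ((Finset.Ico (i+1) n).biUnion Bstar).card := by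
        unfold availGreedy
        exact Finset.card_sdiff_of_subset hKsub
      have hSsum : ((Finset.Ico (i+1) n).biUnion Bstar).card
          = ∑ h ∈ Finset.Ico (i+1) n, (Bstar h).card := csf_card_biUnion n Bstar hSd (i+1)
      have hSle : ((Finset.Ico (i+1) n).biUnion Bstar).card ≤ ((Finset.Ico i n).biUnion 𝒥).card :=
        Finset.card_le_card hKsub
      have hBbound : ∑ h ∈ Finset.Ico i n, (B h).card ≤ ((Finset.Ico i n).biUnion 𝒥).card := by
        rw [← csf_card_biUnion n B hBd i]
        exact Finset.card_le_card (csf_biUnion_subset n 𝒥 B hBs i)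
      rw [Finset.sum_eq_sum_Ico_succ_bot h] at hBbound
      omega



/-- The greedy backward schedule `Bstar` has the minimum number of
nonempty batches among all feasible schedules satisfying the candidate set family. -/
theorem stmt_4 (n b : ℕ) (hb : 0 < b) (p : ℕ → ℝ) (hp : ∀ j, 0 ≤ p j)
    (𝒥 : ℕ → Finset ℕ)
    (hJdisj : ∀ i j, i < n → j < n → i ≠ j → Disjoint (𝒥 i) (𝒥 j))
    (hJfeas : ∀ i, 1 ≤ i → i ≤ n →
      ∑ h ∈ Finset.range i, (𝒥 h).card ≤ i * b)
    (Bstar : ℕ → Finset ℕ)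
    (hgreedy : GreedySpec n b p 𝒥 Bstar)
    (hstar : SatisfiesCSF n b 𝒥 Bstar) :
    ∀ B : ℕ → Finset ℕ, SatisfiesCSF n b 𝒥 B →
      ((Finset.range n).filter (fun i => (Bstar i).Nonempty)).card ≤
      ((Finset.range n).filter (fun i => (B i).Nonempty)).card := by
  intro B hB
  by_contra hcon
  push_neg at hcon
  set m := ((Finset.range n).filter (fun i => (B i).Nonempty)).card with hm
  set ms := ((Finset.range n).filter (fun i => (Bstar i).Nonempty)).card with hms
  obtain ⟨hBd, hBu, hBb, hBs, hBne⟩ := hB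
  obtain ⟨hSd, hSu, hSb, hSs, hSne⟩ := hstar
  -- nonempty index sets are up-closed suffixes
  have hFB : (Finset.range n).filter (fun i => (B i).Nonempty) = Finset.Ico (n - m) n := by
    refine upclosed_eq_Ico n _ (Finset.filter_subset _ _) ?_
    intro i hi j hij hjn
    rw [Finset.mem_filter] at hi ⊢
    exact ⟨Finset.mem_range.mpr hjn, hBne i j hij hjn hi.2⟩
  have hFS : (Finset.range n).filter (fun i => (Bstar i).Nonempty) = Finset.Ico (n - ms) n := by
    refine upclosed_eq_Ico n _ (Finset.filter_subset _ _) ?_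
    intro i hi j hij hjn
    rw [Finset.mem_filter] at hi ⊢
    exact ⟨Finset.mem_range.mpr hjn, hSne i j hij hjn hi.2⟩
  have hmn : m ≤ n := by
    have := Finset.card_le_card (Finset.filter_subset (fun i => (B i).Nonempty) (Finset.range n))
    simpa using this
  have hmsn : ms ≤ n := by
    have := Finset.card_le_card (Finset.filter_subset (fun i => (Bstar i).Nonempty) (Finset.range n))
    simpa using this
  set i₀ := n - m - 1 with hi₀
  have hi₀n : i₀ < n := by omega
  have hi₀mem : i₀ ∈ Finset.Ico (n - ms) n := Finset.mem_Ico.mpr ⟨by omega, hi₀n⟩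
  have hSne0 : (Bstar i₀).Nonempty := by
    have : i₀ ∈ (Finset.range n).filter (fun i => (Bstar i).Nonempty) := hFS ▸ hi₀mem
    exact (Finset.mem_filter.mp this).2
  obtain ⟨_, hcard, _⟩ := hgreedy i₀ hi₀n
  have hpos : 0 < (availGreedy n 𝒥 Bstar i₀).card := by
    have h1 : 0 < (Bstar i₀).card := Finset.card_pos.mpr hSne0
    rw [hcard] at h1
    omega
  have hKsub : (Finset.Ico (i₀+1) n).biUnion Bstar ⊆ (Finset.Ico i₀ n).biUnion 𝒥 :=
    (csf_biUnion_subset n 𝒥 Bstar hSs (i₀+1)).trans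
      (Finset.biUnion_subset_biUnion_of_subset_left _
        (Finset.Ico_subset_Ico (by omega) le_rfl))
  have havail : (availGreedy n 𝒥 Bstar i₀).card =
      ((Finset.Ico i₀ n).biUnion 𝒥).card - ((Finset.Ico (i₀+1) n).biUnion Bstar).card := by
    unfold availGreedy
    exact Finset.card_sdiff_of_subset hKsub
  -- Sstar(i₀+1) < card K
  have hSsum : ((Finset.Ico (i₀+1) n).biUnion Bstar).card
      = ∑ h ∈ Finset.Ico (i₀+1) n, (Bstar h).card := csf_card_biUnion n Bstar hSd (i₀+1)
  -- suffix sum comparison at i₀+1 = n - m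
  have hsuffix := greedy_suffix_sum n b p 𝒥 Bstar B hgreedy
    ⟨hSd, hSu, hSb, hSs, hSne⟩ ⟨hBd, hBu, hBb, hBs, hBne⟩ n (i₀ + 1) (by omega)
  -- B's suffix sum at i₀+1 equals total
  have hzero : ∑ h ∈ Finset.Ico 0 (i₀+1), (B h).card = 0 := by
    refine Finset.sum_eq_zero fun h hh => ?_
    obtain ⟨_, hh2⟩ := Finset.mem_Ico.mp hh
    by_contra hne
    have hne' : (B h).Nonempty := Finset.card_pos.mp (Nat.pos_of_ne_zero hne)
    have : h ∈ Finset.Ico (n - m) n := by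
      rw [← hFB, Finset.mem_filter]
      exact ⟨Finset.mem_range.mpr (by omega), hne'⟩
    have := (Finset.mem_Ico.mp this).1
    omega
  have htotal : ∑ h ∈ Finset.Ico (i₀+1) n, (B h).card
      = ∑ h ∈ Finset.Ico 0 n, (B h).card := by
    rw [← Finset.sum_Ico_consecutive _ (Nat.zero_le (i₀+1)) (by omega : i₀+1 ≤ n), hzero,
      zero_add]
  have hrange : Finset.Ico 0 n = Finset.range n := by
    rw [Finset.range_eq_Ico]
  have hBtot : ∑ h ∈ Finset.Ico 0 n, (B h).card = ((Finset.range n).biUnion 𝒥).card := by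
    rw [← hBu, ← hrange]
    exact (csf_card_biUnion n B hBd 0).symm
  have hKle : ((Finset.Ico i₀ n).biUnion 𝒥).card ≤ ((Finset.range n).biUnion 𝒥).card := by
    refine Finset.card_le_card (Finset.biUnion_subset_biUnion_of_subset_left _ ?_)
    rw [← hrange]
    exact Finset.Ico_subset_Ico (Nat.zero_le _) le_rfl
  omega
end

section
/- Given a candidate set family F = {𝒥_1,...,𝒥_n} and the greedy schedule σ* constructed backwards (batch B*_i takes the min{b, ·} longest available jobs from ∪_{h=i}^n 𝒥_h), for every feasible schedule σ satisfying F and every index i, the start time and completion time of batch i in σ* are at most the start time and completion time, respectively, of batch i in σ. In particular σ* has minimum makespan among all feasible schedules satisfying F. -/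
/-- Completion time of batch `i` in the no-idle-time schedule `B`. -/
def compTime (s : ℝ) (p : ℕ → ℝ) (B : ℕ → Finset ℕ) (i : ℕ) : ℝ :=
  ∑ h ∈ Finset.range (i + 1), ((if (B h).Nonempty then s else 0) + ∑ x ∈ B h, p x)

/-- Start time of batch `i` in the no-idle-time schedule `B`. -/
def startTime (s : ℝ) (p : ℕ → ℝ) (B : ℕ → Finset ℕ) (i : ℕ) : ℝ :=
  (∑ h ∈ Finset.range i, ((if (B h).Nonempty then s else 0) + ∑ x ∈ B h, p x)) +
    (if (B i).Nonempty then s else 0)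

open Finset in
/-- If for every threshold `t` the set `A'` has at least as many jobs of processing time
`≥ t` as `A`, then the total processing time of `A'` is at least that of `A`.
Proved via Hall's marriage theorem. -/
lemma sum_le_of_count_le (p : ℕ → ℝ) (hp : ∀ j, 0 ≤ p j) (A A' : Finset ℕ)
    (h : ∀ t : ℝ, (A.filter (fun x => t ≤ p x)).card ≤ (A'.filter (fun x => t ≤ p x)).card) :
    ∑ x ∈ A, p x ≤ ∑ x ∈ A', p x := by
  classical
  have hall : ∀ s : Finset {x // x ∈ A}, s.card ≤
      (s.biUnion (fun x => A'.filter (fun y => p x.1 ≤ p y))).card := by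
    intro s
    rcases s.eq_empty_or_nonempty with rfl | hs
    · simp
    · obtain ⟨x0, hx0s, hx0min⟩ := s.exists_min_image (fun x => p x.1) hs
      have h1 : s.card ≤ (A.filter (fun x => p x0.1 ≤ p x)).card := by
        have hsub : s.image (fun x => x.1) ⊆ A.filter (fun x => p x0.1 ≤ p x) := by
          intro y hy
          simp only [mem_image] at hy
          obtain ⟨z, hz, rfl⟩ := hy
          exact mem_filter.2 ⟨z.2, hx0min z hz⟩
        calc s.card = (s.image (fun x => x.1)).card :=
              (Finset.card_image_of_injective _ Subtype.val_injective).symm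
          _ ≤ _ := Finset.card_le_card hsub
      have h2 : A'.filter (fun y => p x0.1 ≤ p y) ⊆
          s.biUnion (fun x => A'.filter (fun y => p x.1 ≤ p y)) := by
        intro y hy
        exact mem_biUnion.2 ⟨x0, hx0s, hy⟩
      exact (h1.trans (h (p x0.1))).trans (Finset.card_le_card h2)
  obtain ⟨f, hfinj, hf⟩ := (Finset.all_card_le_biUnion_card_iff_exists_injective _).1 hall
  rw [(Finset.sum_attach A p).symm]
  have h1 : ∑ x ∈ A.attach, p x.1 ≤ ∑ x ∈ A.attach, p (f x) :=
    Finset.sum_le_sum (fun x _ => (mem_filter.1 (hf x)).2)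
  have h2 : ∑ x ∈ A.attach, p (f x) = ∑ y ∈ A.attach.image f, p y :=
    (Finset.sum_image (fun a _ b _ hab => hfinj hab)).symm
  have h3 : A.attach.image f ⊆ A' := by
    intro y hy
    obtain ⟨x, _, rfl⟩ := mem_image.1 hy
    exact (mem_filter.1 (hf x)).1
  calc ∑ x ∈ A.attach, p x.1 ≤ ∑ x ∈ A.attach, p (f x) := h1
    _ = ∑ y ∈ A.attach.image f, p y := h2
    _ ≤ ∑ y ∈ A', p y := Finset.sum_le_sum_of_subset_of_nonneg h3 (fun y _ _ => hp y)

/-- For every feasible schedule `B` satisfying the family and every batch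
index `i`, the greedy schedule's batch `i` starts and completes no later than batch `i`
of `B`; in particular the greedy schedule has minimum makespan. -/
theorem stmt_5 (n b : ℕ) (hn : 0 < n) (hb : 0 < b) (s : ℝ) (hs : 0 < s)
    (p : ℕ → ℝ) (hp : ∀ j, 0 ≤ p j)
    (𝒥 : ℕ → Finset ℕ)
    (hJdisj : ∀ i j, i < n → j < n → i ≠ j → Disjoint (𝒥 i) (𝒥 j))
    (Bstar : ℕ → Finset ℕ)
    (hgreedy : GreedySpec n b p 𝒥 Bstar)
    (hstar : SatisfiesCSF n b 𝒥 Bstar) :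
    ∀ B : ℕ → Finset ℕ, SatisfiesCSF n b 𝒥 B →
      (∀ i, i < n →
        startTime s p Bstar i ≤ startTime s p B i ∧
        compTime s p Bstar i ≤ compTime s p B i) ∧
      compTime s p Bstar (n - 1) ≤ compTime s p B (n - 1) := by
  classical
  intro B hB
  obtain ⟨hBd, hBtot, hBcard, hBsub, hBne⟩ := hB
  obtain ⟨hSd, hStot, hScard, hSsub, hSne⟩ := hstar
  -- suffix-union of any schedule contained in the candidate suffix-union
  have hsubU : ∀ (A : ℕ → Finset ℕ), (∀ h, h < n → A h ⊆ (Finset.Ico h n).biUnion 𝒥) →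
      ∀ i, (Finset.Ico i n).biUnion A ⊆ (Finset.Ico i n).biUnion 𝒥 := by
    intro A hA i x hx
    obtain ⟨h, hh, hxh⟩ := Finset.mem_biUnion.1 hx
    have hh' := Finset.mem_Ico.1 hh
    obtain ⟨h2, hh2, hxh2⟩ := Finset.mem_biUnion.1 (hA h hh'.2 hxh)
    have hh2' := Finset.mem_Ico.1 hh2
    exact Finset.mem_biUnion.2 ⟨h2, Finset.mem_Ico.2 ⟨by omega, hh2'.2⟩, hxh2⟩
  -- a batch is disjoint from later batches
  have hdisj : ∀ (A : ℕ → Finset ℕ), (∀ i j, i < n → j < n → i ≠ j → Disjoint (A i) (A j)) →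
      ∀ i, i < n → Disjoint (A i) ((Finset.Ico (i+1) n).biUnion A) := by
    intro A hA i hi
    rw [Finset.disjoint_biUnion_right]
    intro j hj
    have hj' := Finset.mem_Ico.1 hj
    exact hA i j hi hj'.2 (by omega)
  have pd : ∀ (A : ℕ → Finset ℕ), (∀ i j, i < n → j < n → i ≠ j → Disjoint (A i) (A j)) →
      ∀ (u : Finset ℕ), u ⊆ Finset.range n → (↑u : Set ℕ).PairwiseDisjoint A := by
    intro A hA u hu a ha b hb hab
    exact hA a b (Finset.mem_range.1 (hu ha)) (Finset.mem_range.1 (hu hb)) hab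
  -- counting dominance
  have count : ∀ d, d ≤ n → ∀ t : ℝ,
      (((Finset.Ico (n-d) n).biUnion B).filter (fun x => t ≤ p x)).card ≤
      (((Finset.Ico (n-d) n).biUnion Bstar).filter (fun x => t ≤ p x)).card := by
    intro d
    induction d with
    | zero => intro _ t; simp
    | succ d ih =>
      intro hd t
      set i := n - (d+1) with hidef
      have hi : i < n := by omega
      have hi1 : i + 1 = n - d := by omega
      obtain ⟨hgs, hgc, hgm⟩ := hgreedy i hi
      by_cases hc : (availGreedy n 𝒥 Bstar i).filter (fun x => t ≤ p x) ⊆ Bstar i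
      · -- every available long job was taken: greedy suffix contains all long candidates
        apply Finset.card_le_card
        intro x hx
        obtain ⟨hxB, hxt⟩ := Finset.mem_filter.1 hx
        have hxU : x ∈ (Finset.Ico i n).biUnion 𝒥 :=
          hsubU B (fun h hh => hBsub h hh) i hxB
        refine Finset.mem_filter.2 ⟨?_, hxt⟩
        by_cases hxS : x ∈ (Finset.Ico (i+1) n).biUnion Bstar
        · obtain ⟨h, hh, hxh⟩ := Finset.mem_biUnion.1 hxS
          have hh' := Finset.mem_Ico.1 hh
          exact Finset.mem_biUnion.2 ⟨h, Finset.mem_Ico.2 ⟨by omega, hh'.2⟩, hxh⟩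
        · have hxa : x ∈ availGreedy n 𝒥 Bstar i := Finset.mem_sdiff.2 ⟨hxU, hxS⟩
          have hxb : x ∈ Bstar i := hc (Finset.mem_filter.2 ⟨hxa, hxt⟩)
          exact Finset.mem_biUnion.2 ⟨i, Finset.mem_Ico.2 ⟨le_rfl, hi⟩, hxb⟩
      · -- a long available job was left: greedy batch is full of long jobs
        obtain ⟨y, hyf, hyn⟩ := Finset.not_subset.1 hc
        obtain ⟨hya, hyt⟩ := Finset.mem_filter.1 hyf
        have hblt : (Bstar i).card < (availGreedy n 𝒥 Bstar i).card :=
          Finset.card_lt_card ((Finset.ssubset_iff_of_subset hgs).2 ⟨y, hya, hyn⟩)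
        have hbfull : (Bstar i).card = b := by
          rcases le_total b (availGreedy n 𝒥 Bstar i).card with h | h
          · rw [hgc, min_eq_left h]
          · rw [hgc, min_eq_right h] at hblt; omega
        have hPfull : (Bstar i).filter (fun x => t ≤ p x) = Bstar i :=
          Finset.filter_eq_self.2
            (fun x hx => le_trans hyt (hgm x hx y (Finset.mem_sdiff.2 ⟨hya, hyn⟩)))
        have hins : Finset.Ico i n = insert i (Finset.Ico (i+1) n) :=
          (Finset.insert_Ico_succ_left_eq_Ico hi : insert i (Finset.Ico (i+1) n) = _).symm
        rw [hins, Finset.biUnion_insert, Finset.biUnion_insert,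
          Finset.filter_union, Finset.filter_union]
        have hds : Disjoint ((Bstar i).filter (fun x => t ≤ p x))
            ((((Finset.Ico (i+1) n).biUnion Bstar)).filter (fun x => t ≤ p x)) :=
          Finset.disjoint_filter_filter (hdisj Bstar hSd i hi)
        calc (((B i).filter (fun x => t ≤ p x)) ∪
              (((Finset.Ico (i+1) n).biUnion B).filter (fun x => t ≤ p x))).card
            ≤ ((B i).filter (fun x => t ≤ p x)).card +
              (((Finset.Ico (i+1) n).biUnion B).filter (fun x => t ≤ p x)).card :=
              Finset.card_union_le _ _
          _ ≤ b + (((Finset.Ico (i+1) n).biUnion Bstar).filter (fun x => t ≤ p x)).card := by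
              refine add_le_add ((Finset.card_filter_le _ _).trans (hBcard i hi)) ?_
              rw [hi1]
              exact ih (by omega) t
          _ = (((Bstar i).filter (fun x => t ≤ p x)) ∪
              (((Finset.Ico (i+1) n).biUnion Bstar).filter (fun x => t ≤ p x))).card := by
              rw [Finset.card_union_of_disjoint hds, hPfull, hbfull]
  have count' : ∀ i, i ≤ n → ∀ t : ℝ,
      (((Finset.Ico i n).biUnion B).filter (fun x => t ≤ p x)).card ≤
      (((Finset.Ico i n).biUnion Bstar).filter (fun x => t ≤ p x)).card := by
    intro i hi t
    have := count (n - i) (by omega) t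
    rwa [Nat.sub_sub_self hi] at this
  have sumS : ∀ i, i ≤ n →
      ∑ x ∈ (Finset.Ico i n).biUnion B, p x ≤ ∑ x ∈ (Finset.Ico i n).biUnion Bstar, p x :=
    fun i hi => sum_le_of_count_le p hp _ _ (count' i hi)
  have cardS : ∀ i, i ≤ n →
      ((Finset.Ico i n).biUnion B).card ≤ ((Finset.Ico i n).biUnion Bstar).card := by
    intro i hi
    have h0 := count' i hi 0
    rwa [Finset.filter_true_of_mem (fun x _ => hp x),
      Finset.filter_true_of_mem (fun x _ => hp x)] at h0
  -- if a greedy batch is nonempty then the same batch of B is nonempty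
  have hneB : ∀ h, h < n → (Bstar h).Nonempty → (B h).Nonempty := by
    intro h hh hne
    by_contra hemp
    have hBe : ∀ h', h' ≤ h → B h' = ∅ := by
      intro h' hh'
      by_contra hne'
      exact hemp (hBne h' h hh' hh (Finset.nonempty_iff_ne_empty.2 hne'))
    have hsub2 : (Finset.range n).biUnion B ⊆ (Finset.Ico (h+1) n).biUnion B := by
      intro x hx
      obtain ⟨h', hh', hxh'⟩ := Finset.mem_biUnion.1 hx
      have hh'n := Finset.mem_range.1 hh'
      by_cases hle : h' ≤ h
      · rw [hBe h' hle] at hxh'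
        exact absurd hxh' (Finset.notMem_empty x)
      · exact Finset.mem_biUnion.2 ⟨h', Finset.mem_Ico.2 ⟨by omega, hh'n⟩, hxh'⟩
    have hsub3 : Bstar h ∪ (Finset.Ico (h+1) n).biUnion Bstar ⊆
        (Finset.range n).biUnion Bstar := by
      apply Finset.union_subset
      · intro x hx
        exact Finset.mem_biUnion.2 ⟨h, Finset.mem_range.2 hh, hx⟩
      · intro x hx
        obtain ⟨h', hh', hxh'⟩ := Finset.mem_biUnion.1 hx
        exact Finset.mem_biUnion.2
          ⟨h', Finset.mem_range.2 (Finset.mem_Ico.1 hh').2, hxh'⟩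
    have e1 : ((Finset.range n).biUnion Bstar).card = ((Finset.range n).biUnion B).card := by
      rw [hStot, hBtot]
    have e2 : ((Finset.range n).biUnion B).card ≤
        ((Finset.Ico (h+1) n).biUnion Bstar).card :=
      le_trans (Finset.card_le_card hsub2) (cardS (h+1) (by omega))
    have e3 : (Bstar h).card + ((Finset.Ico (h+1) n).biUnion Bstar).card ≤
        ((Finset.range n).biUnion Bstar).card := by
      rw [← Finset.card_union_of_disjoint (hdisj Bstar hSd h hh)]
      exact Finset.card_le_card hsub3
    have hpos := Finset.Nonempty.card_pos hne
    omega
  have hTot : ∑ x ∈ (Finset.range n).biUnion Bstar, p x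
      = ∑ x ∈ (Finset.range n).biUnion B, p x := by
    rw [hStot, hBtot]
  -- prefix sums in terms of suffix sums
  have prefix_sum : ∀ (A : ℕ → Finset ℕ),
      (∀ i j, i < n → j < n → i ≠ j → Disjoint (A i) (A j)) → ∀ i, i < n →
      ∑ h ∈ Finset.range (i+1), ∑ x ∈ A h, p x
        = ∑ x ∈ (Finset.range n).biUnion A, p x
          - ∑ x ∈ (Finset.Ico (i+1) n).biUnion A, p x := by
    intro A hA i hi
    have h1 : ∑ h ∈ Finset.Ico 0 (i+1), ∑ x ∈ A h, p x
        + ∑ h ∈ Finset.Ico (i+1) n, ∑ x ∈ A h, p x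
        = ∑ h ∈ Finset.Ico 0 n, ∑ x ∈ A h, p x :=
      Finset.sum_Ico_consecutive _ (by omega) (by omega)
    simp only [Finset.range_eq_Ico]
    have h2 : ∑ h ∈ Finset.Ico 0 n, ∑ x ∈ A h, p x
        = ∑ x ∈ (Finset.Ico 0 n).biUnion A, p x := by
      refine (Finset.sum_biUnion (pd A hA _ ?_)).symm
      intro x hx
      rw [Finset.range_eq_Ico]
      exact hx
    have h3 : ∑ h ∈ Finset.Ico (i+1) n, ∑ x ∈ A h, p x
        = ∑ x ∈ (Finset.Ico (i+1) n).biUnion A, p x := by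
      refine (Finset.sum_biUnion (pd A hA _ ?_)).symm
      intro x hx
      have := Finset.mem_Ico.1 hx
      exact Finset.mem_range.2 this.2
    linarith
  have suffix_split : ∀ (A : ℕ → Finset ℕ),
      (∀ i j, i < n → j < n → i ≠ j → Disjoint (A i) (A j)) → ∀ i, i < n →
      ∑ x ∈ (Finset.Ico i n).biUnion A, p x
        = ∑ x ∈ A i, p x + ∑ x ∈ (Finset.Ico (i+1) n).biUnion A, p x := by
    intro A hA i hi
    rw [← (by exact Finset.insert_Ico_succ_left_eq_Ico hi : insert i (Finset.Ico (i+1) n) = Finset.Ico i n), Finset.biUnion_insert,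
      Finset.sum_union (hdisj A hA i hi)]
  have ifle : ∀ i, i < n →
      ∑ h ∈ Finset.range (i+1), (if (Bstar h).Nonempty then s else 0)
        ≤ ∑ h ∈ Finset.range (i+1), (if (B h).Nonempty then s else 0) := by
    intro i hi
    apply Finset.sum_le_sum
    intro h hh
    have hhn : h < n := by
      have := Finset.mem_range.1 hh
      omega
    by_cases hx : (Bstar h).Nonempty
    · rw [if_pos hx, if_pos (hneB h hhn hx)]
    · rw [if_neg hx]
      split <;> linarith
  have comp_le : ∀ i, i < n → compTime s p Bstar i ≤ compTime s p B i := by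
    intro i hi
    unfold compTime
    rw [Finset.sum_add_distrib, Finset.sum_add_distrib]
    apply add_le_add (ifle i hi)
    rw [prefix_sum Bstar hSd i hi, prefix_sum B hBd i hi, hTot]
    have := sumS (i+1) (by omega)
    linarith
  have start_le : ∀ i, i < n → startTime s p Bstar i ≤ startTime s p B i := by
    intro i hi
    have hstA : ∀ A : ℕ → Finset ℕ,
        startTime s p A i = compTime s p A i - ∑ x ∈ A i, p x := by
      intro A
      unfold startTime compTime
      rw [Finset.sum_range_succ]
      ring
    rw [hstA, hstA]
    unfold compTime
    rw [Finset.sum_add_distrib, Finset.sum_add_distrib,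
      prefix_sum Bstar hSd i hi, prefix_sum B hBd i hi, hTot]
    have h1 := ifle i hi
    have h2 := sumS i (le_of_lt hi)
    have h3 := suffix_split Bstar hSd i hi
    have h4 := suffix_split B hBd i hi
    linarith
  exact ⟨fun i hi => ⟨start_le i hi, comp_le i hi⟩, comp_le (n-1) (by omega)⟩
end

section
/- Let F and F' be candidate set families such that F' is obtained from F by moving a job J_j from component 𝒥_{i'} (i' > i) into component 𝒥_i, where i is the largest index k such that f_j(C(B_k(σ*))) < y for the minimum-makespan schedule σ* satisfying F (and f_j(C(B_{i+1}(σ*))) ≥ y). Then the set of feasible schedules satisfying F with maximum cost less than y equals the set of feasible schedules satisfying F' with maximum cost less than y. -/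
/-- The maximum cost of schedule `B` is less than `y`: every job's cost at its batch's
completion time is below `y`. -/
def MaxCostLt (n : ℕ) (s : ℝ) (p : ℕ → ℝ) (f : ℕ → ℝ → ℝ) (B : ℕ → Finset ℕ)
    (y : ℝ) : Prop :=
  ∀ i, i < n → ∀ j ∈ B i, f j (compTime s p B i) < y

/-- Moving job `j` from component `𝒥 i'` down to component `𝒥 i`, where `i`
is the largest index `k` with `f_j(C(B_k(σ*))) < y` for the schedule `σ*` that minimizes
every batch completion time among schedules satisfying `F`, does not change the set of
feasible schedules satisfying the family with maximum cost less than `y`. -/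
theorem stmt_6 (n b : ℕ) (hn : 0 < n) (hb : 0 < b) (s : ℝ) (hs : 0 < s)
    (p : ℕ → ℝ) (hp : ∀ j, 0 ≤ p j)
    (f : ℕ → ℝ → ℝ) (hf : ∀ j, Monotone (f j)) (y : ℝ)
    (𝒥 𝒥' : ℕ → Finset ℕ)
    (hJdisj : ∀ i j, i < n → j < n → i ≠ j → Disjoint (𝒥 i) (𝒥 j))
    (Bstar : ℕ → Finset ℕ)
    (hstarF : SatisfiesCSF n b 𝒥 Bstar)
    (hstarMin : ∀ B, SatisfiesCSF n b 𝒥 B → ∀ i, i < n →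
      compTime s p Bstar i ≤ compTime s p B i)
    (j i i' : ℕ) (hii' : i < i') (hi'n : i' < n)
    (hjmem : j ∈ 𝒥 i')
    (hilt : f j (compTime s p Bstar i) < y)
    (hilargest : ∀ k, i < k → k < n → y ≤ f j (compTime s p Bstar k))
    (hJ'i : 𝒥' i = insert j (𝒥 i))
    (hJ'i' : 𝒥' i' = (𝒥 i').erase j)
    (hJ'other : ∀ h, h ≠ i → h ≠ i' → 𝒥' h = 𝒥 h) :
    ∀ B : ℕ → Finset ℕ,
      (SatisfiesCSF n b 𝒥 B ∧ MaxCostLt n s p f B y) ↔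
      (SatisfiesCSF n b 𝒥' B ∧ MaxCostLt n s p f B y) := by
  have hU2 : ∀ k, (Finset.Ico k n).biUnion 𝒥' ⊆ (Finset.Ico k n).biUnion 𝒥 := by
    intro k x hx
    simp only [Finset.mem_biUnion, Finset.mem_Ico] at hx ⊢
    obtain ⟨h, ⟨hkh, hhn⟩, hxh⟩ := hx
    by_cases hhi : h = i
    · rw [hhi] at hkh hhn hxh
      rw [hJ'i, Finset.mem_insert] at hxh
      rcases hxh with rfl | hxh
      · exact ⟨i', ⟨le_trans hkh hii'.le, hi'n⟩, hjmem⟩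
      · exact ⟨i, ⟨hkh, hhn⟩, hxh⟩
    · by_cases hhi' : h = i'
      · rw [hhi'] at hkh hhn hxh
        rw [hJ'i'] at hxh
        exact ⟨i', ⟨hkh, hhn⟩, Finset.mem_of_mem_erase hxh⟩
      · rw [hJ'other h hhi hhi'] at hxh
        exact ⟨h, ⟨hkh, hhn⟩, hxh⟩
  have hU1 : ∀ k, k ≤ i → (Finset.Ico k n).biUnion 𝒥 ⊆ (Finset.Ico k n).biUnion 𝒥' := by
    intro k hki x hx
    simp only [Finset.mem_biUnion, Finset.mem_Ico] at hx ⊢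
    obtain ⟨h, ⟨hkh, hhn⟩, hxh⟩ := hx
    by_cases hxj : x = j
    · subst hxj
      exact ⟨i, ⟨hki, lt_trans hii' hi'n⟩,
        by rw [hJ'i]; exact Finset.mem_insert_self _ _⟩
    · by_cases hhi : h = i
      · rw [hhi] at hkh hhn hxh
        exact ⟨i, ⟨hkh, hhn⟩, by rw [hJ'i]; exact Finset.mem_insert_of_mem hxh⟩
      · by_cases hhi' : h = i'
        · rw [hhi'] at hkh hhn hxh
          exact ⟨i', ⟨hkh, hhn⟩,
            by rw [hJ'i']; exact Finset.mem_erase_of_ne_of_mem hxj hxh⟩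
        · exact ⟨h, ⟨hkh, hhn⟩, by rw [hJ'other h hhi hhi']; exact hxh⟩
  have hUeq : (Finset.range n).biUnion 𝒥' = (Finset.range n).biUnion 𝒥 := by
    rw [Finset.range_eq_Ico]
    exact le_antisymm (hU2 0) (hU1 0 (Nat.zero_le i))
  intro B
  constructor
  · rintro ⟨⟨hd, hcov, hcard, hsub, hne⟩, hcost⟩
    have hF : SatisfiesCSF n b 𝒥 B := ⟨hd, hcov, hcard, hsub, hne⟩
    have hjB : ∀ k, i < k → k < n → j ∉ B k := by
      intro k hik hkn hjk
      have h1 := hcost k hkn j hjk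
      have h2 := hf j (hstarMin B hF k hkn)
      have h4 := hilargest k hik hkn
      linarith
    refine ⟨⟨hd, by rw [hcov, ← hUeq], hcard, ?_, hne⟩, hcost⟩
    intro k hkn x hx
    by_cases hki : k ≤ i
    · exact hU1 k hki (hsub k hkn hx)
    · push_neg at hki
      have hx' := hsub k hkn hx
      simp only [Finset.mem_biUnion, Finset.mem_Ico] at hx' ⊢
      obtain ⟨h, ⟨hkh, hhn⟩, hxh⟩ := hx'
      have hxj : x ≠ j := by
        rintro rfl
        exact hjB k hki hkn hx
      have hhi : h ≠ i := by omega
      by_cases hhi' : h = i'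
      · rw [hhi'] at hkh hhn hxh
        exact ⟨i', ⟨hkh, hhn⟩,
          by rw [hJ'i']; exact Finset.mem_erase_of_ne_of_mem hxj hxh⟩
      · exact ⟨h, ⟨hkh, hhn⟩, by rw [hJ'other h hhi hhi']; exact hxh⟩
  · rintro ⟨⟨hd, hcov, hcard, hsub, hne⟩, hcost⟩
    exact ⟨⟨hd, by rw [hcov, hUeq], hcard,
      fun k hkn => (hsub k hkn).trans (hU2 k), hne⟩, hcost⟩
end

section
/- Let F = {𝒥_1,...,𝒥_n} be disjoint job sets with union 𝒥. A feasible schedule (with at most b jobs per batch) satisfying F exists if and only if Σ_{h=1}^{i} |𝒥_h| ≤ i·b for all i = 1,...,n. -/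
/-- Given disjoint job sets `𝒥 0, ..., 𝒥 (n-1)`, a schedule with at most
`b` jobs per batch in which every job of batch `B i` comes from `∪_{h ≥ i} 𝒥 h`
(i.e. each job of `𝒥 h` is placed in a batch of index at most `h`) exists if and only if
`∑_{h < i} |𝒥 h| ≤ i·b` for all `i = 1, ..., n` (a Hall-type condition). -/
theorem stmt_12 (n b : ℕ) (hb : 1 ≤ b) (𝒥 : ℕ → Finset ℕ)
    (hJdisj : ∀ i j, i < n → j < n → i ≠ j → Disjoint (𝒥 i) (𝒥 j)) :
    (∃ B : ℕ → Finset ℕ,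
      (∀ i j, i < n → j < n → i ≠ j → Disjoint (B i) (B j)) ∧
      ((Finset.range n).biUnion B = (Finset.range n).biUnion 𝒥) ∧
      (∀ i, i < n → (B i).card ≤ b) ∧
      (∀ i, i < n → B i ⊆ (Finset.Ico i n).biUnion 𝒥)) ↔
    (∀ i, 1 ≤ i → i ≤ n → ∑ h ∈ Finset.range i, (𝒥 h).card ≤ i * b) := by
  classical
  constructor
  · rintro ⟨B, hBdisj, hBun, hBcard, hBsub⟩ i hi1 hin
    have hsub : (Finset.range i).biUnion 𝒥 ⊆ (Finset.range i).biUnion B := by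
      intro x hx
      simp only [Finset.mem_biUnion, Finset.mem_range] at hx ⊢
      obtain ⟨h, hhi, hxh⟩ := hx
      have hxJ : x ∈ (Finset.range n).biUnion B := by
        rw [hBun]
        exact Finset.mem_biUnion.2 ⟨h, Finset.mem_range.2 (lt_of_lt_of_le hhi hin), hxh⟩
      obtain ⟨j, hj, hxB⟩ := Finset.mem_biUnion.1 hxJ
      rw [Finset.mem_range] at hj
      refine ⟨j, ?_, hxB⟩
      by_contra hji
      push_neg at hji
      obtain ⟨h', hh', hxh'⟩ := Finset.mem_biUnion.1 (hBsub j hj hxB)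
      rw [Finset.mem_Ico] at hh'
      have hne : h ≠ h' := by omega
      exact Finset.disjoint_left.1 (hJdisj h h' (by omega) hh'.2 hne) hxh hxh'
    calc ∑ h ∈ Finset.range i, (𝒥 h).card
        = ((Finset.range i).biUnion 𝒥).card := by
          rw [Finset.card_biUnion]
          intro a ha c hc hac
          exact hJdisj a c (lt_of_lt_of_le (Finset.mem_range.1 ha) hin)
            (lt_of_lt_of_le (Finset.mem_range.1 hc) hin) hac
      _ ≤ ((Finset.range i).biUnion B).card := Finset.card_le_card hsub
      _ ≤ ∑ j ∈ Finset.range i, (B j).card := Finset.card_biUnion_le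
      _ ≤ ∑ j ∈ Finset.range i, b := Finset.sum_le_sum
          (fun j hj => hBcard j (lt_of_lt_of_le (Finset.mem_range.1 hj) hin))
      _ = i * b := by simp [mul_comm]
  · intro hHall
    set J := (Finset.range n).biUnion 𝒥 with hJdef
    have hmemJ : ∀ x ∈ J, ∃ h, h < n ∧ x ∈ 𝒥 h := by
      intro x hx
      obtain ⟨h, hh, hxh⟩ := Finset.mem_biUnion.1 hx
      exact ⟨h, Finset.mem_range.1 hh, hxh⟩
    set hidx : ℕ → ℕ := fun x =>
      if hx : ∃ h, h < n ∧ x ∈ 𝒥 h then Nat.find hx else 0 with hidxdef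
    have hidx_spec : ∀ x ∈ J, hidx x < n ∧ x ∈ 𝒥 (hidx x) := by
      intro x hx
      have hex := hmemJ x hx
      simp only [hidxdef, dif_pos hex]
      exact Nat.find_spec hex
    have hidx_eq : ∀ x h, h < n → x ∈ 𝒥 h → hidx x = h := by
      intro x h hh hxh
      have hxJ : x ∈ J := Finset.mem_biUnion.2 ⟨h, Finset.mem_range.2 hh, hxh⟩
      obtain ⟨h1, h2⟩ := hidx_spec x hxJ
      by_contra hne
      exact Finset.disjoint_left.1 (hJdisj _ _ h1 hh hne) h2 hxh
    set lexlt : ℕ → ℕ → Prop := fun y x =>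
      hidx y < hidx x ∨ (hidx y = hidx x ∧ y < x) with lexdef
    set r : ℕ → ℕ := fun x => (J.filter (fun y => lexlt y x)).card with rdef
    have rmono : ∀ x ∈ J, ∀ y ∈ J, lexlt y x → r y < r x := by
      intro x hx y hy hyx
      have hsub : insert y (J.filter (fun z => lexlt z y)) ⊆
          J.filter (fun z => lexlt z x) := by
        intro z hz
        rcases Finset.mem_insert.1 hz with rfl | hz
        · exact Finset.mem_filter.2 ⟨hy, hyx⟩
        · obtain ⟨hzJ, hzy⟩ := Finset.mem_filter.1 hz
          refine Finset.mem_filter.2 ⟨hzJ, ?_⟩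
          simp only [lexdef] at hzy hyx ⊢
          omega
      have hynot : y ∉ J.filter (fun z => lexlt z y) := by
        simp only [Finset.mem_filter, lexdef]
        omega
      calc r y < r y + 1 := Nat.lt_succ_self _
        _ = (insert y (J.filter (fun z => lexlt z y))).card := by
            rw [Finset.card_insert_of_notMem hynot]
        _ ≤ r x := Finset.card_le_card hsub
    have rinj : ∀ x ∈ J, ∀ y ∈ J, r x = r y → x = y := by
      intro x hx y hy hrxy
      by_contra hne
      have : lexlt x y ∨ lexlt y x := by
        simp only [lexdef]
        omega
      rcases this with h | h
      · exact absurd hrxy (Nat.ne_of_lt (rmono y hy x hx h))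
      · exact absurd hrxy.symm (Nat.ne_of_lt (rmono x hx y hy h))
    have rbound : ∀ x ∈ J, r x < ∑ h ∈ Finset.range (hidx x + 1), (𝒥 h).card := by
      intro x hx
      obtain ⟨hxn, hxmem⟩ := hidx_spec x hx
      have hsub : J.filter (fun y => lexlt y x) ⊆
          ((Finset.range (hidx x + 1)).biUnion 𝒥).erase x := by
        intro y hy
        obtain ⟨hyJ, hyx⟩ := Finset.mem_filter.1 hy
        obtain ⟨hyn, hymem⟩ := hidx_spec y hyJ
        refine Finset.mem_erase.2 ⟨?_, ?_⟩
        · rintro rfl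
          simp only [lexdef] at hyx
          omega
        · exact Finset.mem_biUnion.2 ⟨hidx y, Finset.mem_range.2 (by
            simp only [lexdef] at hyx; omega), hymem⟩
      have hxin : x ∈ (Finset.range (hidx x + 1)).biUnion 𝒥 :=
        Finset.mem_biUnion.2 ⟨hidx x, Finset.mem_range.2 (Nat.lt_succ_self _), hxmem⟩
      have hcard : ((Finset.range (hidx x + 1)).biUnion 𝒥).card =
          ∑ h ∈ Finset.range (hidx x + 1), (𝒥 h).card := by
        rw [Finset.card_biUnion]
        intro a ha c hc hac
        exact hJdisj a c (lt_of_lt_of_le (Finset.mem_range.1 ha) hxn)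
          (lt_of_lt_of_le (Finset.mem_range.1 hc) hxn) hac
      calc r x ≤ (((Finset.range (hidx x + 1)).biUnion 𝒥).erase x).card :=
            Finset.card_le_card hsub
        _ < ((Finset.range (hidx x + 1)).biUnion 𝒥).card :=
            Finset.card_erase_lt_of_mem hxin
        _ = _ := hcard
    have rdiv : ∀ x ∈ J, r x / b ≤ hidx x := by
      intro x hx
      obtain ⟨hxn, _⟩ := hidx_spec x hx
      have h1 : r x < (hidx x + 1) * b :=
        lt_of_lt_of_le (rbound x hx) (hHall (hidx x + 1) (by omega) (by omega))
      have := (Nat.div_lt_iff_lt_mul (by omega : 0 < b)).2 h1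
      omega
    refine ⟨fun i => J.filter (fun x => r x / b = i), ?_, ?_, ?_, ?_⟩
    · intro i j _ _ hij
      rw [Finset.disjoint_left]
      intro x hxi hxj
      obtain ⟨_, hi⟩ := Finset.mem_filter.1 hxi
      obtain ⟨_, hj⟩ := Finset.mem_filter.1 hxj
      exact hij (hi ▸ hj ▸ rfl)
    · apply Finset.Subset.antisymm
      · intro x hx
        obtain ⟨_, _, hxB⟩ := Finset.mem_biUnion.1 hx
        exact Finset.mem_filter.1 hxB |>.1
      · intro x hx
        have h1 : r x / b ≤ hidx x := rdiv x hx
        have h2 : hidx x < n := (hidx_spec x hx).1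
        exact Finset.mem_biUnion.2 ⟨r x / b, Finset.mem_range.2 (by omega),
          Finset.mem_filter.2 ⟨hx, rfl⟩⟩
    · intro i _
      have hinj : Set.InjOn r ↑(J.filter (fun x => r x / b = i)) := by
        intro x hx y hy hxy
        exact rinj x (Finset.mem_filter.1 hx).1 y (Finset.mem_filter.1 hy).1 hxy
      have hmaps : ∀ x ∈ J.filter (fun x => r x / b = i),
          r x ∈ Finset.Ico (i * b) ((i + 1) * b) := by
        intro x hx
        obtain ⟨hxJ, hxi⟩ := Finset.mem_filter.1 hx
        rw [Finset.mem_Ico]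
        constructor
        · calc i * b = r x / b * b := by rw [hxi]
            _ ≤ r x := Nat.div_mul_le_self _ _
        · exact (Nat.div_lt_iff_lt_mul (by omega : 0 < b)).1 (by omega)
      calc (J.filter (fun x => r x / b = i)).card
          ≤ (Finset.Ico (i * b) ((i + 1) * b)).card :=
            Finset.card_le_card_of_injOn r hmaps hinj
        _ = b := by rw [Nat.card_Ico]; ring_nf; omega
    · intro i _ x hx
      obtain ⟨hxJ, hxi⟩ := Finset.mem_filter.1 hx
      obtain ⟨hxn, hxmem⟩ := hidx_spec x hxJ
      have := rdiv x hxJ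
      exact Finset.mem_biUnion.2 ⟨hidx x, Finset.mem_Ico.2 ⟨by omega, hxn⟩, hxmem⟩
end

section
/- In the unbounded serial-batch model (b ≥ n), with a candidate set family F = {𝒥_1,...,𝒥_n}, the schedule setting batch B_i := 𝒥_i for every i simultaneously minimizes the start time and the completion time of every batch among all feasible schedules satisfying F, and hence minimizes the makespan. -/
/-- A schedule `B` satisfies the candidate set family `𝒥` in the unbounded serial-batch
model: disjoint batches covering exactly the jobs of the family, every job of batch `B i`
from `∪_{h ≥ i} 𝒥 h`, and all batches from the first nonempty one onward nonempty. -/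
def SatisfiesCSFU (n : ℕ) (𝒥 B : ℕ → Finset ℕ) : Prop :=
  (∀ i j, i < n → j < n → i ≠ j → Disjoint (B i) (B j)) ∧
  ((Finset.range n).biUnion B = (Finset.range n).biUnion 𝒥) ∧
  (∀ i, i < n → B i ⊆ (Finset.Ico i n).biUnion 𝒥) ∧
  (∀ i j, i ≤ j → j < n → (B i).Nonempty → (B j).Nonempty)

/-- In the unbounded model, the schedule `σ*` setting `B i := 𝒥 i` for
every `i` simultaneously minimizes the start time and the completion time of every batch
among all feasible schedules satisfying the family, and hence minimizes the makespan. -/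
theorem stmt_13 (n : ℕ) (hn : 0 < n) (s : ℝ) (hs : 0 < s)
    (p : ℕ → ℝ) (hp : ∀ j, 0 ≤ p j)
    (𝒥 : ℕ → Finset ℕ)
    (hJdisj : ∀ i j, i < n → j < n → i ≠ j → Disjoint (𝒥 i) (𝒥 j)) :
    ∀ B : ℕ → Finset ℕ, SatisfiesCSFU n 𝒥 B →
      (∀ i, i < n →
        startTime s p 𝒥 i ≤ startTime s p B i ∧
        compTime s p 𝒥 i ≤ compTime s p B i) ∧
      compTime s p 𝒥 (n - 1) ≤ compTime s p B (n - 1) := by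
  intro B hB
  obtain ⟨hBdisj, hcover, hsub, hchain⟩ := hB
  have key : ∀ h, h < n → ∀ x ∈ 𝒥 h, ∃ k, k ≤ h ∧ x ∈ B k := by
    intro h hh x hx
    have hx' : x ∈ (Finset.range n).biUnion B := by
      rw [hcover]; exact Finset.mem_biUnion.2 ⟨h, Finset.mem_range.2 hh, hx⟩
    obtain ⟨k, hk, hxB⟩ := Finset.mem_biUnion.1 hx'
    rw [Finset.mem_range] at hk
    obtain ⟨m, hm, hxm⟩ := Finset.mem_biUnion.1 (hsub k hk hxB)
    rw [Finset.mem_Ico] at hm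
    have hmh : m = h := by
      by_contra hne
      exact Finset.disjoint_left.1 (hJdisj m h hm.2 hh hne) hxm hx
    exact ⟨k, by omega, hxB⟩
  have hne : ∀ h, h < n → (𝒥 h).Nonempty → (B h).Nonempty := by
    rintro h hh ⟨x, hx⟩
    obtain ⟨k, hkh, hxB⟩ := key h hh x hx
    exact hchain k h hkh hh ⟨x, hxB⟩
  have main : ∀ m, m ≤ n →
      ∑ h ∈ Finset.range m, ((if (𝒥 h).Nonempty then s else 0) + ∑ x ∈ 𝒥 h, p x) ≤
      ∑ h ∈ Finset.range m, ((if (B h).Nonempty then s else 0) + ∑ x ∈ B h, p x) := by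
    intro m hm
    rw [Finset.sum_add_distrib, Finset.sum_add_distrib]
    have hsetup : ∑ h ∈ Finset.range m, (if (𝒥 h).Nonempty then s else 0) ≤
        ∑ h ∈ Finset.range m, (if (B h).Nonempty then s else 0) := by
      apply Finset.sum_le_sum
      intro h hhm
      have hh : h < n := lt_of_lt_of_le (Finset.mem_range.1 hhm) hm
      by_cases hJ : (𝒥 h).Nonempty
      · simp [hJ, hne h hh hJ]
      · simp only [hJ, if_neg, if_false]
        split_ifs <;> linarith
    have hproc : ∑ h ∈ Finset.range m, ∑ x ∈ 𝒥 h, p x ≤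
        ∑ h ∈ Finset.range m, ∑ x ∈ B h, p x := by
      have hdJ : (↑(Finset.range m) : Set ℕ).PairwiseDisjoint 𝒥 := by
        intro a ha b hb hab
        exact hJdisj a b (lt_of_lt_of_le (Finset.mem_range.1 ha) hm)
          (lt_of_lt_of_le (Finset.mem_range.1 hb) hm) hab
      have hdB : (↑(Finset.range m) : Set ℕ).PairwiseDisjoint B := by
        intro a ha b hb hab
        exact hBdisj a b (lt_of_lt_of_le (Finset.mem_range.1 ha) hm)
          (lt_of_lt_of_le (Finset.mem_range.1 hb) hm) hab
      rw [← Finset.sum_biUnion hdJ, ← Finset.sum_biUnion hdB]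
      apply Finset.sum_le_sum_of_subset_of_nonneg
      · intro x hx
        obtain ⟨h, hhm, hxh⟩ := Finset.mem_biUnion.1 hx
        rw [Finset.mem_range] at hhm
        obtain ⟨k, hkh, hxB⟩ := key h (lt_of_lt_of_le hhm hm) x hxh
        exact Finset.mem_biUnion.2 ⟨k, Finset.mem_range.2 (lt_of_le_of_lt hkh hhm), hxB⟩
      · intros; exact hp _
    linarith
  constructor
  · intro i hi
    constructor
    · unfold startTime
      have h1 := main i (le_of_lt hi)
      have h2 : (if (𝒥 i).Nonempty then s else 0) ≤ (if (B i).Nonempty then s else 0) := by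
        by_cases hJ : (𝒥 i).Nonempty
        · simp [hJ, hne i hi hJ]
        · simp only [hJ, if_false]
          split_ifs <;> linarith
      linarith
    · exact main (i + 1) hi
  · have h1 : n - 1 + 1 = n := by omega
    simpa [compTime, h1] using main n le_rfl
end

section
/- Suppose at iteration m the adjusted family F^m is obtained from F^{m−1} by moving jobs only to lower-indexed components, where a job J_j is moved out of component i only when f_j(C(B_{i}(σ^{m−1}))) ≥ y and σ^{m−1} minimizes every batch completion time among schedules satisfying F^{m−1}. Then for every schedule σ satisfying F^{m−1} with maximum cost less than y, σ also satisfies F^m; hence Π(𝒥, F^m, y) = Π(𝒥, F^{m−1}, y). -/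
/-- If the adjusted family `𝒥'` is obtained from `𝒥` by moving jobs only
to lower-indexed components — a job `j` being moved from component `h` to component
`k < h` only when `k` is the largest index with `f_j(C(B_k(σ^{m-1}))) < y`, where
`σ^{m-1}` minimizes every batch completion time among schedules satisfying `𝒥` — then
every schedule satisfying `𝒥` with maximum cost below `y` also satisfies `𝒥'`; hence
`Π(𝒥, F^m, y) = Π(𝒥, F^{m-1}, y)`. -/
theorem stmt_16 (n b : ℕ) (hn : 0 < n) (hb : 0 < b) (s : ℝ) (hs : 0 < s)
    (p : ℕ → ℝ) (hp : ∀ j, 0 ≤ p j)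
    (f : ℕ → ℝ → ℝ) (hf : ∀ j, Monotone (f j)) (y : ℝ)
    (𝒥 𝒥' : ℕ → Finset ℕ)
    (hJdisj : ∀ i j, i < n → j < n → i ≠ j → Disjoint (𝒥 i) (𝒥 j))
    (hJ'disj : ∀ i j, i < n → j < n → i ≠ j → Disjoint (𝒥' i) (𝒥' j))
    (hsame : (Finset.range n).biUnion 𝒥' = (Finset.range n).biUnion 𝒥)
    (Bprev : ℕ → Finset ℕ)
    (hprevF : SatisfiesCSF n b 𝒥 Bprev)
    (hprevMin : ∀ B, SatisfiesCSF n b 𝒥 B → ∀ i, i < n →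
      compTime s p Bprev i ≤ compTime s p B i)
    (hmove : ∀ h k, h < n → k < n → ∀ j ∈ 𝒥 h, j ∈ 𝒥' k → k ≠ h →
      k < h ∧ f j (compTime s p Bprev k) < y ∧
        (∀ t, k < t → t < n → y ≤ f j (compTime s p Bprev t))) :
    ∀ B : ℕ → Finset ℕ,
      (SatisfiesCSF n b 𝒥 B ∧ MaxCostLt n s p f B y) ↔
      (SatisfiesCSF n b 𝒥' B ∧ MaxCostLt n s p f B y) := by
  intro B
  constructor
  · rintro ⟨⟨hd, hcov, hcard, hsub, hne⟩, hmax⟩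
    refine ⟨⟨hd, by rw [hsame]; exact hcov, hcard, ?_, hne⟩, hmax⟩
    intro i hi j hj
    obtain ⟨h, hh, hjh⟩ := Finset.mem_biUnion.1 (hsub i hi hj)
    rw [Finset.mem_Ico] at hh
    have hj' : j ∈ (Finset.range n).biUnion 𝒥' := by
      rw [hsame, ← hcov]
      exact Finset.mem_biUnion.2 ⟨i, Finset.mem_range.2 hi, hj⟩
    obtain ⟨k, hk, hjk⟩ := Finset.mem_biUnion.1 hj'
    rw [Finset.mem_range] at hk
    by_cases hkh : k = h
    · exact Finset.mem_biUnion.2 ⟨k, Finset.mem_Ico.2 ⟨hkh ▸ hh.1, hk⟩, hjk⟩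
    · obtain ⟨hklt, hfy, htall⟩ := hmove h k hh.2 hk j hjh hjk hkh
      refine Finset.mem_biUnion.2 ⟨k, Finset.mem_Ico.2 ⟨?_, hk⟩, hjk⟩
      by_contra hik
      push_neg at hik
      have h1 := htall i hik hi
      have h2 := hf j (hprevMin B ⟨hd, hcov, hcard, hsub, hne⟩ i hi)
      have h3 := hmax i hi j hj
      linarith
  · rintro ⟨⟨hd, hcov, hcard, hsub, hne⟩, hmax⟩
    refine ⟨⟨hd, hcov.trans hsame, hcard, ?_, hne⟩, hmax⟩
    intro i hi j hj
    obtain ⟨k, hk, hjk⟩ := Finset.mem_biUnion.1 (hsub i hi hj)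
    rw [Finset.mem_Ico] at hk
    have hj' : j ∈ (Finset.range n).biUnion 𝒥 := by
      rw [← hsame, ← hcov]
      exact Finset.mem_biUnion.2 ⟨i, Finset.mem_range.2 hi, hj⟩
    obtain ⟨h, hh, hjh⟩ := Finset.mem_biUnion.1 hj'
    rw [Finset.mem_range] at hh
    by_cases hkh : k = h
    · exact Finset.mem_biUnion.2 ⟨h, Finset.mem_Ico.2 ⟨hkh ▸ hk.1, hh⟩, hjh⟩
    · obtain ⟨hklt, _, _⟩ := hmove h k hh hk.2 j hjh hjk hkh
      exact Finset.mem_biUnion.2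
        ⟨h, Finset.mem_Ico.2 ⟨le_trans hk.1 hklt.le, hh⟩, hjh⟩
end
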